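/- arXiv:2310.07375 — 2 statements merged into one kernel-verified Lean document; each statement's English description precedes it below -/
import Mathlib

section
/- Let w : ℝ × ℝ → ℝ be defined by w(ζ, τ) = sqrt(1/2 − (1/2)·tanh(ζ/3 − 10τ/9)) (the argument of the square root is strictly positive since tanh < 1). Then for every (ζ, τ) ∈ ℝ × ℝ, w satisfies the classical (α = 1) generalized Burgers–Huxley (Burgers–Fisher) equation of Example 2: ∂w/∂τ (ζ, τ) = ∂²w/∂ζ² (ζ, τ) − w(ζ, τ)²·∂w/∂ζ (ζ, τ) + w(ζ, τ)·(1 − w(ζ, τ)²). -/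
/-!
The profile `u x = √(1/2 - 1/2 tanh x)` solves the autonomous ODE `u' = u³ - u`, hence
`u'' = (3u² - 1)(u³ - u)`. For the travelling wave `w(ζ, τ) = u(ζ/3 - 10τ/9)` every derivative
in the equation is a constant multiple of `u³ - u` (or of `(3u² - 1)(u³ - u)`), and since
`u(1 - u²) = -(u³ - u)` the equation reduces to a polynomial identity in `u`.
-/

open Real

theorem Real.hasDerivAt_tanh (x : ℝ) : HasDerivAt tanh (1 - tanh x ^ 2) x := by
  have hcosh : cosh x ≠ 0 := (cosh_pos x).ne'
  have hquot := (hasDerivAt_sinh x).div (hasDerivAt_cosh x) hcosh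
  rw [show sinh / cosh = tanh from funext fun y => (tanh_eq_sinh_div_cosh y).symm] at hquot
  refine hquot.congr_deriv ?_
  rw [tanh_eq_sinh_div_cosh]
  field_simp

noncomputable def tanhProfile (x : ℝ) : ℝ := √(1/2 - 1/2 * tanh x)

theorem half_sub_half_mul_tanh_pos (x : ℝ) : 0 < 1/2 - 1/2 * tanh x := by
  linarith [tanh_lt_one x]

theorem tanhProfile_sq (x : ℝ) : tanhProfile x ^ 2 = 1/2 - 1/2 * tanh x :=
  sq_sqrt (half_sub_half_mul_tanh_pos x).le

theorem hasDerivAt_tanhProfile (x : ℝ) :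
    HasDerivAt tanhProfile (tanhProfile x ^ 3 - tanhProfile x) x := by
  have hsqrt := (((hasDerivAt_tanh x).const_mul (1/2 : ℝ)).const_sub (1/2 : ℝ)).sqrt
    (half_sub_half_mul_tanh_pos x).ne'
  refine hsqrt.congr_deriv ?_
  have hpos : 0 < tanhProfile x := sqrt_pos.2 (half_sub_half_mul_tanh_pos x)
  have htanh : tanh x = 1 - 2 * tanhProfile x ^ 2 := by linarith [tanhProfile_sq x]
  change _ / (2 * tanhProfile x) = _
  rw [htanh]
  field_simp
  ring

section AutonomousODE

variable {u F F' ξ : ℝ → ℝ} {c : ℝ}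

theorem deriv_comp_of_hasDerivAt_eq_comp (hu : ∀ x, HasDerivAt u (F (u x)) x)
    (hξ : ∀ x, HasDerivAt ξ c x) : deriv (fun x => u (ξ x)) = fun x => F (u (ξ x)) * c :=
  funext fun x => ((hu (ξ x)).comp x (hξ x)).deriv

theorem iteratedDeriv_two_comp_of_hasDerivAt_eq_comp (hu : ∀ x, HasDerivAt u (F (u x)) x)
    (hF : ∀ y, HasDerivAt F (F' y) y) (hξ : ∀ x, HasDerivAt ξ c x) (x : ℝ) :
    iteratedDeriv 2 (fun x => u (ξ x)) x = F' (u (ξ x)) * F (u (ξ x)) * c ^ 2 := by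
  rw [iteratedDeriv_succ, iteratedDeriv_one, deriv_comp_of_hasDerivAt_eq_comp hu hξ]
  have hFu := ((hF (u (ξ x))).comp x ((hu (ξ x)).comp x (hξ x))).mul_const c
  refine hFu.deriv.trans ?_
  ring

end AutonomousODE

/-- the travelling-wave profile
`w(ζ,τ) = sqrt(1/2 − (1/2)·tanh(ζ/3 − 10τ/9))`
satisfies the classical (α = 1) generalized Burgers–Huxley (Burgers–Fisher)
equation of Example 2. -/
theorem stmt_1 (w : ℝ → ℝ → ℝ)
    (hw : ∀ ζ τ : ℝ, w ζ τ = Real.sqrt (1/2 - 1/2 * Real.tanh (ζ/3 - 10*τ/9))) :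
    ∀ ζ τ : ℝ,
      deriv (fun t => w ζ t) τ =
        iteratedDeriv 2 (fun z => w z τ) ζ - w ζ τ ^ 2 * deriv (fun z => w z τ) ζ +
          w ζ τ * (1 - w ζ τ ^ 2) := by
  intro ζ τ
  obtain rfl : w = fun z t => tanhProfile (z/3 - 10*t/9) := funext₂ hw
  have hcube : ∀ y : ℝ, HasDerivAt (fun y => y ^ 3 - y) (3 * y ^ 2 - 1) y := fun y =>
    ((hasDerivAt_pow 3 y).sub (hasDerivAt_id' y)).congr_deriv (by norm_num)
  have hspace : ∀ z, HasDerivAt (fun z => z/3 - 10*τ/9) (1/3) z := fun z =>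
    ((hasDerivAt_id' z).div_const 3).sub_const _
  have htime : ∀ t, HasDerivAt (fun t => ζ/3 - 10*t/9) (-(10/9)) t := fun t =>
    ((((hasDerivAt_id' t).const_mul 10).div_const 9).const_sub (ζ/3)).congr_deriv (by ring)
  simp only [
    deriv_comp_of_hasDerivAt_eq_comp (F := fun y => y ^ 3 - y) hasDerivAt_tanhProfile htime,
    deriv_comp_of_hasDerivAt_eq_comp (F := fun y => y ^ 3 - y) hasDerivAt_tanhProfile hspace,
    iteratedDeriv_two_comp_of_hasDerivAt_eq_comp hasDerivAt_tanhProfile hcube hspace]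
  ring
end

section
/- Let y ∈ [0, 1] and let f : ℝ → ℝ be three times continuously differentiable on [0, 1] with f(0) = 0 and f(1) = 0. Then Σ_{i=0}^{2} f^{(i)}(0)·(R³_y)^{(i)}(0) + ∫₀¹ f‴(s)·(R³_y)‴(s) ds = f(y), where the derivatives of R³_y are computed branchwise (using the s ≤ y polynomial branch of Eq. (2.3) for s < y and the s > y branch for s > y); that is, R³ is a reproducing kernel for the subspace of W³₂[0,1] of functions vanishing at 0 and 1. -/
/-!
Integrating by parts three times on `[0, y]` and on `[y, 1]` turns `∫ f‴ R‴` into the boundary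
terms `f″ R‴ - f′ R⁽⁴⁾ + f R⁽⁵⁾` minus `∫ f R⁽⁶⁾`, and `R⁽⁶⁾ = 0` because both branches are
quintic in `s`. The kernel satisfies the natural boundary conditions `R′(0) = -R⁽⁴⁾(0)` and
`R″(0) = R‴(0)`, so the terms at `0` cancel the sum `Σ f⁽ⁱ⁾(0) R⁽ⁱ⁾(0)`, and `R‴(1) = R⁽⁴⁾(1) = 0`,
so together with `f(1) = 0` the terms at `1` vanish. At `y` the two branches have the same third
and fourth derivatives while the fifth jumps by `1`, which leaves exactly `f(y)`.
-/

/-- The branch of the kernel `R³_y(s)` of Eq. (2.3) used for `s ≤ y`. -/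
noncomputable def R3A (y s : ℝ) : ℝ :=
  -(1/18720) * ((-1 + y) * s * (156*s^4
    + 6*y^2*(120 + 30*s + 10*s^2 - 5*s^3 + s^4)
    - 4*y^3*(120 + 30*s + 10*s^2 - 5*s^3 + s^4)
    + y^4*(120 + 30*s + 10*s^2 - 5*s^3 + s^4)
    + 12*y*(360 - 300*s - 100*s^2 - 15*s^3 + 3*s^4)))

/-- The branch of the kernel `R³_y(s)` of Eq. (2.3) used for `s > y`. -/
noncomputable def R3B (y s : ℝ) : ℝ :=
  -(1/18720) * ((-1 + s) * y * (30*y*s*(-120 + 6*s - 4*s^2 + s^3)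
    + 10*y^2*s*(-120 + 6*s - 4*s^2 + s^3)
    + 120*s*(36 + 6*s - 4*s^2 + s^3)
    - 5*y^3*s*(36 + 6*s - 4*s^2 + s^3)
    + y^4*(156 + 36*s + 6*s^2 - 4*s^3 + s^4)))

open Set Polynomial Filter Topology MeasureTheory

theorem Polynomial.iteratedDeriv_eval {𝕜 : Type*} [NontriviallyNormedField 𝕜] (p : 𝕜[X]) (n : ℕ) :
    iteratedDeriv n (fun x => p.eval x) = fun x => (derivative^[n] p).eval x := by
  induction n with
  | zero => simp
  | succ n ih =>
    ext x
    rw [iteratedDeriv_succ, ih, Polynomial.deriv, Function.iterate_succ_apply']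

theorem ContDiffOn.hasDerivAt_iteratedDerivWithin {𝕜 : Type*} [NontriviallyNormedField 𝕜]
    {f : 𝕜 → 𝕜} {s : Set 𝕜} {n k : ℕ} {x : 𝕜} (hf : ContDiffOn 𝕜 n f s) (hk : k < n)
    (hs : UniqueDiffOn 𝕜 s) (hx : s ∈ 𝓝 x) :
    HasDerivAt (iteratedDerivWithin k f s) (iteratedDerivWithin (k + 1) f s x) x := by
  have h := ((hf.differentiableOn_iteratedDerivWithin (mod_cast hk) hs) x
    (mem_of_mem_nhds hx)).hasDerivWithinAt
  rw [← iteratedDerivWithin_succ] at h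
  exact h.hasDerivAt hx

theorem ContDiff.hasDerivAt_iteratedDeriv {𝕜 : Type*} [NontriviallyNormedField 𝕜]
    {g : 𝕜 → 𝕜} {n k : ℕ} (hg : ContDiff 𝕜 n g) (hk : k < n) (x : 𝕜) :
    HasDerivAt (iteratedDeriv k g) (iteratedDeriv (k + 1) g x) x := by
  rw [iteratedDeriv_succ]
  exact ((hg.differentiable_iteratedDeriv k (mod_cast hk)) x).hasDerivAt

noncomputable def boundaryForm (f g : ℝ → ℝ) (s : Set ℝ) (x : ℝ) : ℝ :=
  iteratedDerivWithin 2 f s x * iteratedDeriv 3 g x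
    - iteratedDerivWithin 1 f s x * iteratedDeriv 4 g x + f x * iteratedDeriv 5 g x

theorem integral_iteratedDerivWithin_three_mul_iteratedDeriv_three {f g : ℝ → ℝ} {s : Set ℝ}
    {a b : ℝ} (hs : UniqueDiffOn ℝ s) (hab : a ≤ b) (hsub : Icc a b ⊆ s)
    (hf : ContDiffOn ℝ 3 f s) (hg : ContDiff ℝ 6 g) :
    ∫ x in a..b, iteratedDerivWithin 3 f s x * iteratedDeriv 3 g x =
      boundaryForm f g s b - boundaryForm f g s a - ∫ x in a..b, f x * iteratedDeriv 6 g x := by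
  have hfc : ∀ k ≤ 3, ContinuousOn (iteratedDerivWithin k f s) (Icc a b) := fun k hk =>
    (hf.continuousOn_iteratedDerivWithin (mod_cast hk) hs).mono hsub
  have hgc : ∀ k ≤ 6, ContinuousOn (iteratedDeriv k g) (Icc a b) := fun k hk =>
    (hg.continuous_iteratedDeriv k (mod_cast hk)).continuousOn
  have hfc₀ : ContinuousOn f (Icc a b) := by simpa using hfc 0 (by norm_num)
  have hderiv : ∀ x ∈ Ioo a b, HasDerivAt (boundaryForm f g s)
      (iteratedDerivWithin 3 f s x * iteratedDeriv 3 g x + f x * iteratedDeriv 6 g x) x := by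
    intro x hx
    have hx : s ∈ 𝓝 x := mem_of_superset (Ioo_mem_nhds hx.1 hx.2) (Ioo_subset_Icc_self.trans hsub)
    have hF k (hk : k < 3) := hf.hasDerivAt_iteratedDerivWithin hk hs hx
    have hG k (hk : k < 6) := hg.hasDerivAt_iteratedDeriv hk x
    have hF0 := hF 0 (by norm_num)
    rw [iteratedDerivWithin_zero] at hF0
    exact ((((hF 2 (by norm_num)).mul (hG 3 (by norm_num))).sub
      ((hF 1 (by norm_num)).mul (hG 4 (by norm_num)))).add
      (hF0.mul (hG 5 (by norm_num)))).congr_deriv (by norm_num; ring)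
  have hint₁ : IntervalIntegrable (fun x => iteratedDerivWithin 3 f s x * iteratedDeriv 3 g x)
      volume a b :=
    ((hfc 3 le_rfl).mul (hgc 3 (by norm_num))).intervalIntegrable_of_Icc hab
  have hint₂ : IntervalIntegrable (fun x => f x * iteratedDeriv 6 g x) volume a b :=
    (hfc₀.mul (hgc 6 le_rfl)).intervalIntegrable_of_Icc hab
  have hftc := intervalIntegral.integral_eq_sub_of_hasDeriv_right_of_le
    (f := boundaryForm f g s) hab
    ((((hfc 2 (by norm_num)).mul (hgc 3 (by norm_num))).sub
      ((hfc 1 (by norm_num)).mul (hgc 4 (by norm_num)))).add (hfc₀.mul (hgc 5 (by norm_num))))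
    (fun x hx => (hderiv x hx).hasDerivWithinAt) (hint₁.add hint₂)
  rw [intervalIntegral.integral_add hint₁ hint₂] at hftc
  linarith

theorem integral_mul_ite_le_eq_add {φ p q : ℝ → ℝ} {a b y : ℝ} (hay : a ≤ y) (hyb : y ≤ b)
    (hφ : ContinuousOn φ (Icc a b)) (hp : Continuous p) (hq : Continuous q) (hpq : p y = q y) :
    ∫ x in a..b, φ x * (if x ≤ y then p x else q x) =
      (∫ x in a..y, φ x * p x) + ∫ x in y..b, φ x * q x := by
  have hK : Continuous fun x => if x ≤ y then p x else q x :=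
    Continuous.if_le hp hq continuous_id continuous_const fun x hx => hx ▸ hpq
  have hint {c d : ℝ} (hcd : c ≤ d) (hsub : Icc c d ⊆ Icc a b) :
      IntervalIntegrable (fun x => φ x * if x ≤ y then p x else q x) volume c d :=
    ((hφ.mono hsub).mul hK.continuousOn).intervalIntegrable_of_Icc hcd
  rw [← intervalIntegral.integral_add_adjacent_intervals
    (hint hay (Icc_subset_Icc le_rfl hyb)) (hint hyb (Icc_subset_Icc hay le_rfl))]
  congr 1
  · refine intervalIntegral.integral_congr fun x hx => ?_
    rw [uIcc_of_le hay] at hx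
    simp only [if_pos hx.2]
  · refine intervalIntegral.integral_congr fun x hx => ?_
    rw [uIcc_of_le hyb] at hx
    rcases eq_or_lt_of_le hx.1 with rfl | hyx
    · simp only [le_refl, if_true, hpq]
    · simp only [if_neg (not_le.mpr hyx)]

theorem sum_add_integral_eq_of_kernel_conditions {A B : ℝ → ℝ} {y : ℝ} (hy : y ∈ Icc (0 : ℝ) 1)
    (hA : ContDiff ℝ 6 A) (hB : ContDiff ℝ 6 B)
    (hA₆ : iteratedDeriv 6 A = 0) (hB₆ : iteratedDeriv 6 B = 0)
    (hA₁₄ : deriv A 0 = -iteratedDeriv 4 A 0) (hA₂₃ : iteratedDeriv 2 A 0 = iteratedDeriv 3 A 0)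
    (hB₃ : iteratedDeriv 3 B 1 = 0) (hB₄ : iteratedDeriv 4 B 1 = 0)
    (hAB₃ : iteratedDeriv 3 A y = iteratedDeriv 3 B y)
    (hAB₄ : iteratedDeriv 4 A y = iteratedDeriv 4 B y)
    (hAB₅ : iteratedDeriv 5 A y - iteratedDeriv 5 B y = 1)
    {f : ℝ → ℝ} (hf : ContDiffOn ℝ 3 f (Icc 0 1)) (hf0 : f 0 = 0) (hf1 : f 1 = 0) :
    (∑ i ∈ Finset.range 3,
        iteratedDerivWithin i f (Icc 0 1) 0 * iteratedDeriv i A 0) +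
      ∫ s in (0:ℝ)..1, iteratedDerivWithin 3 f (Icc 0 1) s *
        (if s ≤ y then iteratedDeriv 3 A s else iteratedDeriv 3 B s) = f y := by
  obtain ⟨hy0, hy1⟩ := hy
  have hU : UniqueDiffOn ℝ (Icc (0:ℝ) 1) := uniqueDiffOn_Icc one_pos
  rw [integral_mul_ite_le_eq_add hy0 hy1 (hf.continuousOn_iteratedDerivWithin le_rfl hU)
      (hA.continuous_iteratedDeriv 3 (by norm_num)) (hB.continuous_iteratedDeriv 3 (by norm_num))
      hAB₃,
    integral_iteratedDerivWithin_three_mul_iteratedDeriv_three hU hy0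
      (Icc_subset_Icc le_rfl hy1) hf hA,
    integral_iteratedDerivWithin_three_mul_iteratedDeriv_three hU hy1
      (Icc_subset_Icc hy0 le_rfl) hf hB]
  simp only [hA₆, hB₆, Pi.zero_apply, mul_zero, intervalIntegral.integral_zero, sub_zero,
    boundaryForm, Finset.sum_range_succ, Finset.sum_range_zero, iteratedDerivWithin_zero,
    iteratedDeriv_zero, iteratedDeriv_one, hA₁₄, hA₂₃, hB₃, hB₄, hAB₃, hAB₄, hf0, hf1]
  linear_combination f y * hAB₅

section Kernel

variable (y : ℝ)

noncomputable def R3Bpoly : ℝ[X] :=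
  -C (1/18720) * ((-1 + X) * C y * (C (30*y) * X * (-120 + 6*X - 4*X^2 + X^3)
    + C (10*y^2) * X * (-120 + 6*X - 4*X^2 + X^3)
    + 120*X*(36 + 6*X - 4*X^2 + X^3)
    - C (5*y^3) * X * (36 + 6*X - 4*X^2 + X^3)
    + C (y^4) * (156 + 36*X + 6*X^2 - 4*X^3 + X^4)))

theorem R3B_eq_eval : R3B y = fun s => (R3Bpoly y).eval s := by
  ext s
  simp [R3Bpoly, R3B]

/-- The branches differ by the truncated power `(s - y)⁵ / 5!`, the source of the jump of the
fifth derivative at `y`. -/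
theorem R3A_eq_eval :
    R3A y = fun s => (R3Bpoly y + C (1/120) * (X - C y) ^ 5).eval s := by
  ext s
  simp [R3Bpoly, R3A]
  ring

theorem natDegree_R3Bpoly_le : (R3Bpoly y).natDegree ≤ 5 := by
  unfold R3Bpoly
  compute_degree!

theorem contDiff_R3A : ContDiff ℝ 6 (R3A y) := by
  unfold R3A
  fun_prop

theorem contDiff_R3B : ContDiff ℝ 6 (R3B y) := by
  unfold R3B
  fun_prop

theorem iteratedDeriv_R3A (k : ℕ) (x : ℝ) :
    iteratedDeriv k (R3A y) x =
      iteratedDeriv k (R3B y) x + (5).descFactorial k / 120 * (x - y) ^ (5 - k) := by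
  rw [R3A_eq_eval, R3B_eq_eval, Polynomial.iteratedDeriv_eval, Polynomial.iteratedDeriv_eval]
  simp [iterate_map_add, iterate_derivative_C_mul, iterate_derivative_X_sub_pow]
  ring

theorem iteratedDeriv_three_R3B :
    iteratedDeriv 3 (R3B y) =
      fun s => -(y * (120 + 30*y + 10*y^2 - 5*y^3 + y^4)) / 312 * (s - 1) ^ 2 := by
  rw [R3B_eq_eval, Polynomial.iteratedDeriv_eval]
  ext s
  simp [R3Bpoly, derivative_mul, derivative_pow]
  ring

theorem iteratedDeriv_four_R3B :
    iteratedDeriv 4 (R3B y) =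
      fun s => -(y * (120 + 30*y + 10*y^2 - 5*y^3 + y^4)) / 156 * (s - 1) := by
  ext s
  rw [iteratedDeriv_succ, iteratedDeriv_three_R3B]
  exact ((((hasDerivAt_id s).sub_const 1).pow 2).const_mul _).deriv.trans (by simp; ring)

theorem iteratedDeriv_six_R3B : iteratedDeriv 6 (R3B y) = 0 := by
  rw [R3B_eq_eval, Polynomial.iteratedDeriv_eval,
    iterate_derivative_eq_zero ((natDegree_R3Bpoly_le y).trans_lt (by norm_num))]
  exact funext fun _ => eval_zero

theorem iteratedDeriv_six_R3A : iteratedDeriv 6 (R3A y) = 0 := by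
  ext x
  simp [iteratedDeriv_R3A, iteratedDeriv_six_R3B]

theorem deriv_R3A_zero : deriv (R3A y) 0 = -iteratedDeriv 4 (R3A y) 0 := by
  rw [iteratedDeriv_R3A, iteratedDeriv_four_R3B, ← iteratedDeriv_one, iteratedDeriv_R3A,
    R3B_eq_eval, Polynomial.iteratedDeriv_eval]
  simp [R3Bpoly, derivative_mul, derivative_pow]
  ring

theorem iteratedDeriv_two_R3A_zero :
    iteratedDeriv 2 (R3A y) 0 = iteratedDeriv 3 (R3A y) 0 := by
  rw [iteratedDeriv_R3A, iteratedDeriv_R3A, iteratedDeriv_three_R3B, R3B_eq_eval,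
    Polynomial.iteratedDeriv_eval]
  simp [R3Bpoly, derivative_mul, derivative_pow]
  ring

end Kernel

/-- the reproducing property of the kernel `R³` of Eq. (2.3) on the
subspace of `W³₂[0,1]` of functions vanishing at `0` and `1`:
`Σ_{i=0}^{2} f⁽ⁱ⁾(0)·(R³_y)⁽ⁱ⁾(0) + ∫₀¹ f‴(s)·(R³_y)‴(s) ds = f(y)`, where the
derivatives of `R³_y` are computed branchwise (the `s ≤ y` polynomial branch for
`s ≤ y`, the `s > y` branch for `s > y`). -/
theorem stmt_10 (y : ℝ) (hy : y ∈ Set.Icc (0:ℝ) 1) (f : ℝ → ℝ)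
    (hf : ContDiffOn ℝ 3 f (Set.Icc 0 1)) (hf0 : f 0 = 0) (hf1 : f 1 = 0) :
    (∑ i ∈ Finset.range 3,
        iteratedDerivWithin i f (Set.Icc 0 1) 0 * iteratedDeriv i (R3A y) 0) +
      ∫ s in (0:ℝ)..1, iteratedDerivWithin 3 f (Set.Icc 0 1) s *
        (if s ≤ y then iteratedDeriv 3 (R3A y) s else iteratedDeriv 3 (R3B y) s)
      = f y := by
  refine sum_add_integral_eq_of_kernel_conditions hy (contDiff_R3A y) (contDiff_R3B y)
    (iteratedDeriv_six_R3A y) (iteratedDeriv_six_R3B y) (deriv_R3A_zero y)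
    (iteratedDeriv_two_R3A_zero y) (by simp [iteratedDeriv_three_R3B])
    (by simp [iteratedDeriv_four_R3B]) ?_ ?_ ?_ hf hf0 hf1 <;>
  simp [iteratedDeriv_R3A]
end
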